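/- Let μ be a probability measure on ℝⁿ satisfying LSI_{a,α}(C), h a bounded measurable function on ℝⁿ, and μ̃ = e^h dμ / Z with Z = ∫ e^h dμ. Then μ̃ satisfies LSI_{a,α}(C e^{osc(h)}), where osc(h) = sup h − inf h. -/

import Mathlib

open MeasureTheory Real
open scoped ENNReal NNReal

/-- The modified energy function `H_{a,β}` (quadratic near 0, power-`β` growth beyond `a`). -/
noncomputable def Hab (a β : ℝ) (x : ℝ) : ℝ :=
  if |x| ≤ a then x ^ 2 / 2
  else a ^ (2 - β) * |x| ^ β / β + a ^ 2 * (β - 2) / (2 * β)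

private lemma aux_log {s t : ℝ} (hs : 0 < s) (ht : 0 < t) :
    0 ≤ s * Real.log s - Real.log t * s - s + t := by
  have h := Real.log_le_sub_one_of_pos (div_pos ht hs)
  rw [Real.log_div ht.ne' hs.ne'] at h
  have h2 : s * (Real.log t - Real.log s) ≤ s * (t / s - 1) :=
    mul_le_mul_of_nonneg_left h hs.le
  have h3 : s * (t / s - 1) = t - s := by field_simp
  nlinarith

private lemma Hab_nonneg {a β : ℝ} (ha : 0 < a) (hb : 2 ≤ β) (x : ℝ) : 0 ≤ Hab a β x := by
  unfold Hab
  split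
  · positivity
  · have hb0 : (0:ℝ) < β := by linarith
    have h1 : (0:ℝ) ≤ a ^ (2 - β) * |x| ^ β / β :=
      div_nonneg (mul_nonneg (Real.rpow_nonneg ha.le _) (Real.rpow_nonneg (abs_nonneg x) _)) hb0.le
    have h2 : (0:ℝ) ≤ a ^ 2 * (β - 2) / (2 * β) := by
      apply div_nonneg
      · nlinarith
      · linarith
    linarith

private lemma Hab_measurable {a β : ℝ} (hb : 2 ≤ β) : Measurable (Hab a β) := by
  unfold Hab
  refine Measurable.ite (measurableSet_le measurable_abs measurable_const) ?_ ?_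
  · exact ((measurable_id.pow_const 2).div_const 2)
  · have : Continuous fun x : ℝ => a ^ (2 - β) * |x| ^ β / β + a ^ 2 * (β - 2) / (2 * β) := by
      have h1 : Continuous fun x : ℝ => |x| ^ β :=
        continuous_abs.rpow_const (fun x => Or.inr (by linarith))
      continuity
    exact this.measurable

/-- Entropy of a nonnegative function with respect to a measure. -/
noncomputable def Ent {E : Type*} [MeasurableSpace E] (μ : Measure E) (g : E → ℝ) : ℝ :=
  (∫ x, g x * Real.log (g x) ∂μ) - (∫ x, g x ∂μ) * Real.log (∫ x, g x ∂μ)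

/-- The modified logarithmic Sobolev inequality `LSI_{a,α}(C)` (with `β` the conjugate
exponent of `α`) for a measure on `ι → ℝ`. -/
def LSI {ι : Type*} [Fintype ι] [DecidableEq ι] (μ : Measure (ι → ℝ)) (a β C : ℝ) : Prop :=
  ∀ f : (ι → ℝ) → ℝ, ContDiff ℝ (⊤ : ℕ∞) f → (∀ x, 0 < f x) → MemLp f 2 μ →
    Ent μ (fun x => f x ^ 2) ≤
      C * ∫ x, (∑ i, Hab a β (fderiv ℝ f x (Pi.single i 1) / f x)) * f x ^ 2 ∂μ

set_option maxHeartbeats 2000000 in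
theorem stmt_11 (n : ℕ) (μ : Measure (Fin n → ℝ)) [IsProbabilityMeasure μ]
    (a α β C : ℝ) (ha : 0 < a) (hα : 1 < α) (hα2 : α ≤ 2) (hβ : 1 / α + 1 / β = 1)
    (hμ : LSI μ a β C)
    (h : (Fin n → ℝ) → ℝ) (hmeas : Measurable h) (hbdd : ∃ M, ∀ x, |h x| ≤ M) :
    LSI (μ.withDensity fun x =>
        ENNReal.ofReal (Real.exp (h x) / ∫ y, Real.exp (h y) ∂μ))
      a β (C * Real.exp ((⨆ x, h x) - ⨅ x, h x)) := by
  classical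
  obtain ⟨M, hM⟩ := hbdd
  -- basic facts about β
  have hβ2 : 2 ≤ β := by
    have hα0 : (0:ℝ) < α := by linarith
    have h1 : 1 / β = 1 - 1 / α := by linarith
    have h2 : (0:ℝ) < 1 / β := by
      rw [h1]
      have : 1 / α < 1 := by rw [div_lt_one hα0]; exact hα
      linarith
    have hb0 : 0 < β := by
      rcases lt_trichotomy β 0 with hb | hb | hb
      · exfalso; have : 1 / β < 0 := by exact div_neg_of_pos_of_neg one_pos hb
        linarith
      · rw [hb] at h2; simp at h2
      · exact hb
    have h3 : 1 / β ≤ 1 / 2 := by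
      rw [h1]
      have : (1:ℝ)/2 ≤ 1 / α := by
        rw [div_le_div_iff₀ (by norm_num) hα0]; linarith
      linarith
    rw [div_le_div_iff₀ hb0 (by norm_num)] at h3
    linarith
  set Z : ℝ := ∫ y, Real.exp (h y) ∂μ with hZdef
  set S : ℝ := ⨆ x, h x with hSdef
  set I : ℝ := ⨅ x, h x with hIdef
  have hhS : ∀ x, h x ≤ S := fun x =>
    le_ciSup ⟨M, by rintro _ ⟨y, rfl⟩; exact (abs_le.mp (hM y)).2⟩ x
  have hhI : ∀ x, I ≤ h x := fun x =>
    ciInf_le ⟨-M, by rintro _ ⟨y, rfl⟩; exact (abs_le.mp (hM y)).1⟩ x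
  have hexp_int : Integrable (fun x => Real.exp (h x)) μ := by
    refine Integrable.mono' (integrable_const (Real.exp M))
      ((Real.measurable_exp.comp hmeas).aestronglyMeasurable) ?_
    filter_upwards with x
    rw [Real.norm_eq_abs, abs_of_pos (Real.exp_pos _)]
    exact Real.exp_le_exp.mpr ((abs_le.mp (hM x)).2)
  have hZge : Real.exp (-M) ≤ Z := by
    have h1 : ∫ _y, Real.exp (-M) ∂μ ≤ Z := by
      apply integral_mono (integrable_const _) hexp_int
      intro x; exact Real.exp_le_exp.mpr (by linarith [(abs_le.mp (hM x)).1])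
    simpa using h1
  have hZpos : 0 < Z := lt_of_lt_of_le (Real.exp_pos _) hZge
  set ν : Measure (Fin n → ℝ) :=
    μ.withDensity (fun x => ENNReal.ofReal (Real.exp (h x) / Z)) with hνdef
  have hρmeas : Measurable (fun x => Real.exp (h x) / Z) :=
    (Real.measurable_exp.comp hmeas).div_const Z
  have hρpos : ∀ x, 0 < Real.exp (h x) / Z := fun x => div_pos (Real.exp_pos _) hZpos
  have hρleS : ∀ x, Real.exp (h x) / Z ≤ Real.exp S / Z := by
    intro x; gcongr; exact hhS x
  have hρgeI : ∀ x, Real.exp I / Z ≤ Real.exp (h x) / Z := by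
    intro x; gcongr; exact hhI x
  -- conversion of integrals
  have hcoe : (fun x => ENNReal.ofReal (Real.exp (h x) / Z))
      = fun x => ((Real.toNNReal (Real.exp (h x) / Z) : ℝ≥0) : ℝ≥0∞) := rfl
  have hconv : ∀ ψ : (Fin n → ℝ) → ℝ,
      ∫ x, ψ x ∂ν = ∫ x, (Real.exp (h x) / Z) * ψ x ∂μ := by
    intro ψ
    rw [hνdef, hcoe, integral_withDensity_eq_integral_smul hρmeas.real_toNNReal]
    congr 1; funext x
    rw [NNReal.smul_def, Real.coe_toNNReal _ (hρpos x).le, smul_eq_mul]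
  have hint_iff : ∀ ψ : (Fin n → ℝ) → ℝ, AEStronglyMeasurable ψ μ →
      (Integrable ψ ν ↔ Integrable ψ μ) := by
    intro ψ hψ
    rw [hνdef, hcoe, integrable_withDensity_iff_integrable_coe_smul hρmeas.real_toNNReal]
    have heq : (fun x => (Real.toNNReal (Real.exp (h x) / Z) : ℝ) • ψ x)
        = fun x => (Real.exp (h x) / Z) * ψ x := by
      funext x; rw [Real.coe_toNNReal _ (hρpos x).le, smul_eq_mul]
    rw [heq]
    constructor
    · intro hi
      refine Integrable.mono' (hi.norm.const_mul (Z * Real.exp M)) hψ ?_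
      filter_upwards with x
      rw [Real.norm_eq_abs, Real.norm_eq_abs, abs_mul, abs_of_pos (hρpos x)]
      have h1 : Real.exp (-M) / Z ≤ Real.exp (h x) / Z := by
        gcongr; linarith [(abs_le.mp (hM x)).1]
      have h2 : 0 < Real.exp (-M) / Z := div_pos (Real.exp_pos _) hZpos
      calc |ψ x| = (Z * Real.exp M) * ((Real.exp (-M) / Z) * |ψ x|) := by
            rw [Real.exp_neg]; field_simp
        _ ≤ (Z * Real.exp M) * (Real.exp (h x) / Z * |ψ x|) := by
            apply mul_le_mul_of_nonneg_left _ (by positivity)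
            exact mul_le_mul_of_nonneg_right h1 (abs_nonneg _)
    · intro hi
      refine Integrable.mono' (hi.norm.const_mul (Real.exp M / Z))
        (hρmeas.aestronglyMeasurable.mul hψ) ?_
      filter_upwards with x
      rw [Real.norm_eq_abs, Real.norm_eq_abs, abs_mul, abs_of_pos (hρpos x)]
      apply mul_le_mul_of_nonneg_right _ (abs_nonneg _)
      gcongr; exact (abs_le.mp (hM x)).2
  -- ν is a probability measure
  have hν1 : IsProbabilityMeasure ν := by
    constructor
    rw [hνdef, withDensity_apply _ MeasurableSet.univ, Measure.restrict_univ,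
      ← ofReal_integral_eq_lintegral_ofReal (hexp_int.div_const Z)
        (Filter.Eventually.of_forall fun x => (hρpos x).le)]
    rw [integral_div]
    rw [div_self hZpos.ne']
    simp
  haveI := hν1
  intro f hf hfpos hf2
  have hfc : Continuous f := hf.continuous
  have hgcont : Continuous (fun x => f x ^ 2) := hfc.pow 2
  have hgν : Integrable (fun x => f x ^ 2) ν := hf2.integrable_sq
  have hgμ : Integrable (fun x => f x ^ 2) μ :=
    (hint_iff _ hgcont.aestronglyMeasurable).mp hgν
  have hf2μ : MemLp f 2 μ :=
    (memLp_two_iff_integrable_sq hfc.aestronglyMeasurable).mpr hgμ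
  set t : ℝ := ∫ x, f x ^ 2 ∂μ with htdef
  set s : ℝ := ∫ x, f x ^ 2 ∂ν with hsdef
  have htpos : 0 < t := by
    rw [htdef]
    refine (integral_pos_iff_support_of_nonneg (fun x => sq_nonneg _) hgμ).mpr ?_
    have hsupp : Function.support (fun x => f x ^ 2) = Set.univ := by
      ext x; simp only [Function.mem_support, Set.mem_univ, iff_true]
      exact pow_ne_zero 2 (hfpos x).ne'
    rw [hsupp]; simp
  have hspos : 0 < s := by
    rw [hsdef]
    refine (integral_pos_iff_support_of_nonneg (fun x => sq_nonneg _) hgν).mpr ?_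
    have hsupp : Function.support (fun x => f x ^ 2) = Set.univ := by
      ext x; simp only [Function.mem_support, Set.mem_univ, iff_true]
      exact pow_ne_zero 2 (hfpos x).ne'
    rw [hsupp]; simp
  set Γ : (Fin n → ℝ) → ℝ :=
    fun x => ∑ i, Hab a β (fderiv ℝ f x (Pi.single i 1) / f x) with hΓdef
  have hΓmeas : Measurable Γ := by
    apply Finset.measurable_sum
    intro i _
    have hc : Continuous (fun x => fderiv ℝ f x (Pi.single i 1) / f x) :=
      ((hf.continuous_fderiv (by simp)).clm_apply continuous_const).div hfc
        (fun x => (hfpos x).ne')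
    exact (Hab_measurable hβ2).comp hc.measurable
  have hGnonneg : ∀ x, 0 ≤ Γ x * f x ^ 2 := fun x =>
    mul_nonneg (Finset.sum_nonneg fun i _ => Hab_nonneg ha hβ2 _) (sq_nonneg _)
  have hGmeas : AEStronglyMeasurable (fun x => Γ x * f x ^ 2) μ :=
    (hΓmeas.mul (hgcont.measurable)).aestronglyMeasurable
  set u : ℝ := ∫ x, Γ x * f x ^ 2 ∂μ with hudef
  set v : ℝ := ∫ x, Γ x * f x ^ 2 ∂ν with hvdef
  have hunn : 0 ≤ u := integral_nonneg hGnonneg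
  have hvnn : 0 ≤ v := integral_nonneg hGnonneg
  by_cases hLint : Integrable (fun x => f x ^ 2 * Real.log (f x ^ 2)) μ
  · -- main case
    have hlogcont : Continuous (fun x => Real.log (f x ^ 2)) :=
      hgcont.log (fun x => pow_ne_zero 2 (hfpos x).ne')
    have hLcont : Continuous (fun x => f x ^ 2 * Real.log (f x ^ 2)) := hgcont.mul hlogcont
    have hLν : Integrable (fun x => f x ^ 2 * Real.log (f x ^ 2)) ν :=
      (hint_iff _ hLcont.aestronglyMeasurable).mpr hLint
    set φ : (Fin n → ℝ) → ℝ :=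
      fun x => f x ^ 2 * Real.log (f x ^ 2) - Real.log t * f x ^ 2 - f x ^ 2 + t with hφdef
    have hφnonneg : ∀ x, 0 ≤ φ x := by
      intro x
      have h0 := aux_log (pow_pos (hfpos x) 2) htpos
      simp only [hφdef]
      linarith
    have hφcont : Continuous φ := by
      rw [hφdef]
      exact ((hLcont.sub (continuous_const.mul hgcont)).sub hgcont).add continuous_const
    have i1μ : Integrable (fun x => f x ^ 2 * Real.log (f x ^ 2) - Real.log t * f x ^ 2) μ :=
      hLint.sub (hgμ.const_mul _)
    have i2μ : Integrable (fun x => f x ^ 2 * Real.log (f x ^ 2) - Real.log t * f x ^ 2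
        - f x ^ 2) μ := i1μ.sub hgμ
    have i1ν : Integrable (fun x => f x ^ 2 * Real.log (f x ^ 2) - Real.log t * f x ^ 2) ν :=
      hLν.sub (hgν.const_mul _)
    have i2ν : Integrable (fun x => f x ^ 2 * Real.log (f x ^ 2) - Real.log t * f x ^ 2
        - f x ^ 2) ν := i1ν.sub hgν
    have hφintμ : Integrable φ μ :=
      ((hLint.sub (hgμ.const_mul _)).sub hgμ).add (integrable_const t)
    have hφintν : Integrable φ ν :=
      ((hLν.sub (hgν.const_mul _)).sub hgν).add (integrable_const t)
    have hφμval : ∫ x, φ x ∂μ = (∫ x, f x ^ 2 * Real.log (f x ^ 2) ∂μ) - t * Real.log t := by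
      simp only [hφdef]
      rw [integral_add i2μ (integrable_const t),
        integral_sub i1μ hgμ,
        integral_sub hLint (hgμ.const_mul _),
        integral_const_mul, integral_const]
      simp only [measure_univ, probReal_univ, ENNReal.toReal_one, smul_eq_mul, one_mul]
      rw [← htdef]
      ring
    have hφνval : ∫ x, φ x ∂ν
        = (∫ x, f x ^ 2 * Real.log (f x ^ 2) ∂ν) - Real.log t * s - s + t := by
      simp only [hφdef]
      rw [integral_add i2ν (integrable_const t),
        integral_sub i1ν hgν,
        integral_sub hLν (hgν.const_mul _),
        integral_const_mul, integral_const]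
      simp only [measure_univ, probReal_univ, ENNReal.toReal_one, smul_eq_mul, one_mul]
      try rw [← hsdef]
    have step1 : (∫ x, f x ^ 2 * Real.log (f x ^ 2) ∂ν) - s * Real.log s ≤ ∫ x, φ x ∂ν := by
      rw [hφνval]
      have h0 := aux_log hspos htpos
      linarith
    have hρφint : Integrable (fun x => (Real.exp (h x) / Z) * φ x) μ := by
      refine Integrable.mono' (hφintμ.norm.const_mul (Real.exp S / Z))
        (hρmeas.aestronglyMeasurable.mul hφcont.aestronglyMeasurable) ?_
      filter_upwards with x
      rw [Real.norm_eq_abs, Real.norm_eq_abs, abs_mul, abs_of_pos (hρpos x)]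
      exact mul_le_mul_of_nonneg_right (hρleS x) (abs_nonneg _)
    have step2 : ∫ x, φ x ∂ν ≤ (Real.exp S / Z) * ∫ x, φ x ∂μ := by
      rw [hconv φ, ← integral_const_mul]
      apply integral_mono hρφint (hφintμ.const_mul _)
      intro x
      exact mul_le_mul_of_nonneg_right (hρleS x) (hφnonneg x)
    have hEμ' : (∫ x, f x ^ 2 * Real.log (f x ^ 2) ∂μ) - t * Real.log t ≤ C * u := by
      have h0 := hμ f hf hfpos hf2μ
      simp only [Ent] at h0
      rw [← htdef] at h0
      have hfold : (∫ x, (∑ i, Hab a β (fderiv ℝ f x (Pi.single i 1) / f x)) * f x ^ 2 ∂μ)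
          = u := by simp only [hudef, hΓdef]
      rw [hfold] at h0
      exact h0
    have hcSnn : (0:ℝ) ≤ Real.exp S / Z := (div_pos (Real.exp_pos _) hZpos).le
    have step5 : (Real.exp S / Z) * (C * u) ≤ C * Real.exp (S - I) * v := by
      have hexpSI : Real.exp (S - I) * (Real.exp I / Z) = Real.exp S / Z := by
        rw [Real.exp_sub]; field_simp
      rcases le_or_gt 0 C with hC | hC
      · by_cases hGint : Integrable (fun x => Γ x * f x ^ 2) μ
        · have hρGint : Integrable (fun x => (Real.exp (h x) / Z) * (Γ x * f x ^ 2)) μ := by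
            refine Integrable.mono' (hGint.norm.const_mul (Real.exp S / Z))
              (hρmeas.aestronglyMeasurable.mul hGmeas) ?_
            filter_upwards with x
            rw [Real.norm_eq_abs, Real.norm_eq_abs, abs_mul, abs_of_pos (hρpos x)]
            exact mul_le_mul_of_nonneg_right (hρleS x) (abs_nonneg _)
          have hle : (Real.exp I / Z) * u ≤ v := by
            rw [hvdef, hconv, hudef, ← integral_const_mul]
            apply integral_mono (by exact hGint.const_mul _) hρGint
            intro x
            exact mul_le_mul_of_nonneg_right (hρgeI x) (hGnonneg x)
          calc (Real.exp S / Z) * (C * u)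
              = (C * Real.exp (S - I)) * ((Real.exp I / Z) * u) := by rw [← hexpSI]; ring
            _ ≤ (C * Real.exp (S - I)) * v :=
                mul_le_mul_of_nonneg_left hle (mul_nonneg hC (Real.exp_pos _).le)
        · have hu0 : u = 0 := by rw [hudef]; exact integral_undef hGint
          have hv0 : v = 0 := by
            rw [hvdef]
            exact integral_undef (fun hcon => hGint ((hint_iff _ hGmeas).mp hcon))
          rw [hu0, hv0]; simp
      · have hEμnn : 0 ≤ (∫ x, f x ^ 2 * Real.log (f x ^ 2) ∂μ) - t * Real.log t := by
          have h0 : 0 ≤ ∫ x, φ x ∂μ := integral_nonneg hφnonneg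
          rw [hφμval] at h0; exact h0
        have hCu : 0 ≤ C * u := le_trans hEμnn hEμ'
        have hu0 : u = 0 := by nlinarith
        have hv0 : v = 0 := by
          by_cases hGint : Integrable (fun x => Γ x * f x ^ 2) μ
          · have hae : (fun x => Γ x * f x ^ 2) =ᵐ[μ] 0 :=
              (integral_eq_zero_iff_of_nonneg_ae
                (Filter.Eventually.of_forall hGnonneg) hGint).mp hu0
            have haeν : (fun x => Γ x * f x ^ 2) =ᵐ[ν] 0 :=
              hae.filter_mono (Measure.AbsolutelyContinuous.ae_le
                (by rw [hνdef]; exact withDensity_absolutelyContinuous μ _))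
            rw [hvdef, integral_congr_ae haeν]
            simp
          · rw [hvdef]
            exact integral_undef (fun hcon => hGint ((hint_iff _ hGmeas).mp hcon))
        rw [hu0, hv0]; simp
    have hEνeq : Ent ν (fun x => f x ^ 2)
        = (∫ x, f x ^ 2 * Real.log (f x ^ 2) ∂ν) - s * Real.log s := by
      simp only [Ent]
      try rw [← hsdef]
    rw [hEνeq]
    refine le_trans step1 (le_trans step2 ?_)
    rw [hφμval]
    exact le_trans (mul_le_mul_of_nonneg_left hEμ' hcSnn) step5
  · -- degenerate case: entropy integrand not integrable, contradiction by scaling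
    exfalso
    obtain ⟨r, hrdef⟩ : ∃ r : ℝ, r = -(C * u + t * Real.log t + 1) / (2 * t) := ⟨_, rfl⟩
    obtain ⟨c, hcdef⟩ : ∃ c : ℝ, c = Real.exp r := ⟨_, rfl⟩
    have hcpos : 0 < c := hcdef ▸ Real.exp_pos r
    have hc2 : (0:ℝ) < c ^ 2 := pow_pos hcpos 2
    have hμ' := hμ (fun x => c * f x) (contDiff_const.mul hf)
      (fun x => mul_pos hcpos (hfpos x)) (hf2μ.const_mul c)
    have hRHS : ∀ x : Fin n → ℝ,
        (∑ i, Hab a β (fderiv ℝ (fun y => c * f y) x (Pi.single i 1) / (c * f x)))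
          * (c * f x) ^ 2 = c ^ 2 * (Γ x * f x ^ 2) := by
      intro x
      have hdf : fderiv ℝ (fun y => c * f y) x = c • fderiv ℝ f x :=
        fderiv_const_mul (hf.differentiable (by simp) x) c
      have hq : ∀ i : Fin n, fderiv ℝ (fun y => c * f y) x (Pi.single i 1) / (c * f x)
          = fderiv ℝ f x (Pi.single i 1) / f x := by
        intro i
        rw [hdf, ContinuousLinearMap.smul_apply, smul_eq_mul,
          mul_div_mul_left _ _ hcpos.ne']
      simp only [hq, hΓdef]
      ring
    simp only [hRHS] at hμ'
    rw [integral_const_mul, ← hudef] at hμ'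
    have hnotint : ¬ Integrable (fun x => (c * f x) ^ 2 * Real.log ((c * f x) ^ 2)) μ := by
      intro hcon
      apply hLint
      have heq : (fun x => f x ^ 2 * Real.log (f x ^ 2))
          = fun x => (1 / c ^ 2) * ((c * f x) ^ 2 * Real.log ((c * f x) ^ 2))
              - Real.log (c ^ 2) * f x ^ 2 := by
        funext x
        have hfx2 : (0:ℝ) < f x ^ 2 := pow_pos (hfpos x) 2
        rw [mul_pow, Real.log_mul (pow_ne_zero 2 hcpos.ne') hfx2.ne']
        field_simp
        ring
      rw [heq]
      exact (hcon.const_mul _).sub (hgμ.const_mul _)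
    have hval : ∫ x, (c * f x) ^ 2 ∂μ = c ^ 2 * t := by
      simp only [mul_pow]
      rw [integral_const_mul, ← htdef]
    have hEnt' : Ent μ (fun x => (c * f x) ^ 2) = -(c ^ 2 * t * Real.log (c ^ 2 * t)) := by
      simp only [Ent]
      rw [integral_undef hnotint, hval]
      ring
    rw [hEnt'] at hμ'
    have hlog : Real.log (c ^ 2 * t) = 2 * r + Real.log t := by
      rw [Real.log_mul (pow_ne_zero 2 hcpos.ne') htpos.ne', hcdef, Real.log_pow,
        Real.log_exp]
      push_cast; ring
    rw [hlog] at hμ'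
    have key : -(t * (2 * r + Real.log t)) ≤ C * u := by
      have h1 : c ^ 2 * -(t * (2 * r + Real.log t)) ≤ c ^ 2 * (C * u) := by
        linear_combination hμ'
      exact le_of_mul_le_mul_left h1 hc2
    have h2rt : 2 * r * t = -(C * u + t * Real.log t + 1) := by
      rw [hrdef]; field_simp
    nlinarith [key, h2rt]
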